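/- arXiv:1908.09030 — 2 statements merged into one kernel-verified Lean document; each statement's English description precedes it below -/
import Mathlib

section
/- Let H = (E, (X_1, …, X_n)) be a multi-hypergraph and t_1, …, t_n integers with 0 ≤ t_i ≤ |X_i|, and let ρ be the polymatroid on E given by ρ(A) = Σ_{i=1}^n min(|A ∩ X_i|, t_i). Given a proper k-coloring c of the line graph G_H, for each i ∈ {1,…,k} the hyperedges X_h with c(h) = i are pairwise disjoint, and one may define the matroid N_i on E as the direct sum of the uniform matroids U_{t_h, X_h} over all h with c(h) = i together with a rank-zero matroid on the remaining elements; explicitly r_{N_i}(A) = Σ_{h : c(h)=i} min(|A ∩ X_h|, t_h). Then (N_1,…,N_k) ∈ Δ_ρ^k; hence if G_H has a proper k-coloring then ρ is k-decomposable. If moreover the sets X_1,…,X_n are distinct and for each i either t_i = 1 or 0 < t_i < |X_i|, then the map c ↦ (N_1,…,N_k) is injective. -/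
variable {α : Type*}

/-- `ρ` is an (integer) polymatroid on ground set `E`. -/
def IsPolymatroidOn [DecidableEq α] (E : Finset α) (ρ : Finset α → ℤ) : Prop :=
  ρ ∅ = 0 ∧
  (∀ A B : Finset α, A ⊆ B → B ⊆ E → ρ A ≤ ρ B) ∧
  (∀ A B : Finset α, A ⊆ E → B ⊆ E → ρ (A ∪ B) + ρ (A ∩ B) ≤ ρ A + ρ B)

/-- `r` is the rank function of a matroid on `E` (matroids are exactly the
`1`-polymatroids). -/
def IsMatroidRankOn [DecidableEq α] (E : Finset α) (r : Finset α → ℤ) : Prop :=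
  IsPolymatroidOn E r ∧ ∀ e ∈ E, r {e} ≤ 1

/-- `ρ` is a sum of `k` matroid rank functions on `E`. -/
def KDecomposable [DecidableEq α] (k : ℕ) (E : Finset α) (ρ : Finset α → ℤ) : Prop :=
  ∃ M : Fin k → Finset α → ℤ,
    (∀ i, IsMatroidRankOn E (M i)) ∧ ∀ X ⊆ E, ρ X = ∑ i, M i X

/-- The line graph of the multi-hypergraph with hyperedges `X 0, …, X (n-1)`. -/
def lineGraph [DecidableEq α] {n : ℕ} (X : Fin n → Finset α) : SimpleGraph (Fin n) where
  Adj i j := i ≠ j ∧ (X i ∩ X j).Nonempty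
  symm := by
    constructor
    rintro i j ⟨hij, hne⟩
    exact ⟨hij.symm, by rwa [Finset.inter_comm]⟩
  loopless := by constructor; rintro i ⟨h, -⟩; exact h rfl

/-- A proper `k`-coloring of a graph. -/
def ProperColoring {V : Type*} (G : SimpleGraph V) {k : ℕ} (c : V → Fin k) : Prop :=
  ∀ u v, G.Adj u v → c u ≠ c v

/-- The polymatroid `ρ(A) = Σ_i min(|A ∩ X_i|, t_i)`. -/
def hypRho [DecidableEq α] {n : ℕ} (X : Fin n → Finset α) (t : Fin n → ℤ) :
    Finset α → ℤ :=
  fun A => ∑ i, min (((A ∩ X i).card : ℤ)) (t i)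

/-- The rank function of the matroid `N_i` built from a coloring `c`: the direct
sum of the uniform matroids `U_{t_h, X_h}` over hyperedges of color `i`, together
with a rank-zero matroid on the remaining elements; explicitly
`r_{N_i}(A) = Σ_{h : c h = i} min(|A ∩ X_h|, t_h)`. -/
def hypN [DecidableEq α] {n k : ℕ} (X : Fin n → Finset α) (t : Fin n → ℤ)
    (c : Fin n → Fin k) (i : Fin k) : Finset α → ℤ :=
  fun A => ∑ h ∈ Finset.univ.filter (fun h => c h = i),
    min (((A ∩ X h).card : ℤ)) (t h)

/-!
A proper colouring makes every colour class a family of pairwise disjoint hyperedges, so `N_i` is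
a direct sum of the uniform matroids `U_{t_h, X_h}`, hence a matroid, and `Σ_i r_{N_i} = ρ` merely
regroups the sum defining `ρ` by colour.

For injectivity, `N_{c h}` restricts to `U_{t_h, X_h}` on `X_h`, and this uniform matroid is
connected when `t_h = 1` or `0 < t_h < |X_h|`, because `min (a + b, t) = min (a, t) + min (b, t)` is
impossible for `a, b ≥ 1`. A connected restriction of a direct sum lies in one summand, so if
`c` and `c'` give the same matroids then `X_h ⊆ X_g ⊆ X_f` with `c' g = c h = c f`. Disjointness
within the colour class of `c` forces `f = h`, so `X_g = X_h`, and injectivity of `X` gives `g = h`.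
-/

open Finset

section UniformRank

variable [DecidableEq α]

def uniformRank (Y : Finset α) (t : ℤ) (A : Finset α) : ℤ :=
  min (#(A ∩ Y) : ℤ) t

lemma uniformRank_of_subset {Y A : Finset α} (t : ℤ) (hA : A ⊆ Y) :
    uniformRank Y t A = min (#A : ℤ) t := by
  rw [uniformRank, inter_eq_left.mpr hA]

lemma uniformRank_eq_zero_of_disjoint {Y A : Finset α} {t : ℤ} (ht : 0 ≤ t)
    (hAY : Disjoint A Y) : uniformRank Y t A = 0 := by
  simp [uniformRank, disjoint_iff_inter_eq_empty.mp hAY, ht]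

lemma uniformRank_le_card (Y : Finset α) (t : ℤ) (A : Finset α) :
    uniformRank Y t A ≤ #(A ∩ Y) :=
  min_le_left _ _

lemma isPolymatroidOn_uniformRank (E Y : Finset α) {t : ℤ} (ht : 0 ≤ t) :
    IsPolymatroidOn E (uniformRank Y t) := by
  refine ⟨uniformRank_eq_zero_of_disjoint ht (disjoint_empty_left Y), ?_, ?_⟩
  · intro A B hAB _
    have : #(A ∩ Y) ≤ #(B ∩ Y) := card_le_card (inter_subset_inter_right hAB)
    simp only [uniformRank]
    omega
  · intro A B _ _
    have hmod : #((A ∪ B) ∩ Y) + #(A ∩ B ∩ Y) = #(A ∩ Y) + #(B ∩ Y) := by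
      rw [union_inter_distrib_right, inter_inter_distrib_right]
      exact card_union_add_card_inter _ _
    have hA : #(A ∩ B ∩ Y) ≤ #(A ∩ Y) := card_le_card (inter_subset_inter_right inter_subset_left)
    have hB : #(A ∩ B ∩ Y) ≤ #(B ∩ Y) := card_le_card (inter_subset_inter_right inter_subset_right)
    simp only [uniformRank]
    omega

lemma uniformRank_eq_inter_add_sdiff {Y B : Finset α} {t : ℤ} (ht : 0 ≤ t)
    (hYB : Y ⊆ B ∨ Disjoint Y B) (A : Finset α) :
    uniformRank Y t A = uniformRank Y t (A ∩ B) + uniformRank Y t (A \ B) := by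
  rcases hYB with hYB | hYB
  · have : Disjoint (A \ B) Y := disjoint_of_subset_right hYB sdiff_disjoint
    rw [uniformRank_eq_zero_of_disjoint ht this, add_zero, uniformRank, uniformRank,
      inter_assoc, inter_eq_right.mpr hYB]
  · have : Disjoint (A ∩ B) Y := disjoint_of_subset_left inter_subset_right hYB.symm
    rw [uniformRank_eq_zero_of_disjoint ht this, zero_add, uniformRank, uniformRank,
      sdiff_inter_right_comm, sdiff_eq_self_of_disjoint (disjoint_of_subset_left
        inter_subset_right hYB)]

end UniformRank

section DirectSum

variable {ι : Type*} [DecidableEq α] {s : Finset ι} {Y : ι → Finset α} {t : ι → ℤ}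

lemma IsPolymatroidOn.sum {E : Finset α} {ρ : ι → Finset α → ℤ}
    (hρ : ∀ j ∈ s, IsPolymatroidOn E (ρ j)) :
    IsPolymatroidOn E (fun A => ∑ j ∈ s, ρ j A) := by
  refine ⟨sum_eq_zero fun j hj => (hρ j hj).1, fun A B hAB hB => ?_, fun A B hA hB => ?_⟩
  · exact sum_le_sum fun j hj => (hρ j hj).2.1 A B hAB hB
  · simp only [← sum_add_distrib]
    exact sum_le_sum fun j hj => (hρ j hj).2.2 A B hA hB

lemma sum_uniformRank_le_card (hY : (s : Set ι).PairwiseDisjoint Y) (A : Finset α) :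
    ∑ f ∈ s, uniformRank (Y f) (t f) A ≤ #A :=
  calc ∑ f ∈ s, uniformRank (Y f) (t f) A
      ≤ ∑ f ∈ s, (#(A ∩ Y f) : ℤ) := sum_le_sum fun f _ => uniformRank_le_card _ _ _
    _ = #(s.biUnion fun f => A ∩ Y f) := by
        rw [card_biUnion (hY.mono_on fun f _ => inter_subset_right)]
        push_cast
        rfl
    _ ≤ #A := by
        exact_mod_cast card_le_card (biUnion_subset.mpr fun f _ => inter_subset_left)

lemma isMatroidRankOn_sum_uniformRank (E : Finset α) (hY : (s : Set ι).PairwiseDisjoint Y)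
    (ht : ∀ f ∈ s, 0 ≤ t f) :
    IsMatroidRankOn E (fun A => ∑ f ∈ s, uniformRank (Y f) (t f) A) := by
  refine ⟨IsPolymatroidOn.sum fun f hf => isPolymatroidOn_uniformRank E (Y f) (ht f hf),
    fun e _ => ?_⟩
  simpa using sum_uniformRank_le_card (t := t) hY {e}

lemma sum_uniformRank_of_subset (hY : (s : Set ι).PairwiseDisjoint Y) (ht : ∀ f ∈ s, 0 ≤ t f)
    {g : ι} (hg : g ∈ s) {A : Finset α} (hA : A ⊆ Y g) :
    ∑ f ∈ s, uniformRank (Y f) (t f) A = min (#A : ℤ) (t g) := by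
  rw [sum_eq_single_of_mem g hg fun f hf hfg => uniformRank_eq_zero_of_disjoint (ht f hf)
      (disjoint_of_subset_left hA (hY hg hf hfg.symm)),
    uniformRank_of_subset _ hA]

lemma sum_uniformRank_eq_inter_add_sdiff (hY : (s : Set ι).PairwiseDisjoint Y)
    (ht : ∀ f ∈ s, 0 ≤ t f) {g : ι} (hg : g ∈ s) (A : Finset α) :
    ∑ f ∈ s, uniformRank (Y f) (t f) A =
      ∑ f ∈ s, uniformRank (Y f) (t f) (A ∩ Y g) +
        ∑ f ∈ s, uniformRank (Y f) (t f) (A \ Y g) := by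
  rw [← sum_add_distrib]
  refine sum_congr rfl fun f hf => uniformRank_eq_inter_add_sdiff (ht f hf) ?_ A
  obtain rfl | hfg := eq_or_ne f g
  · exact .inl subset_rfl
  · exact .inr (hY hf hg hfg)

lemma exists_mem_inter_of_sum_uniformRank_pos {A : Finset α}
    (hA : 0 < ∑ f ∈ s, uniformRank (Y f) (t f) A) : ∃ f ∈ s, (A ∩ Y f).Nonempty := by
  by_contra! h
  refine hA.not_ge (sum_nonpos fun f hf => ?_)
  simp [uniformRank, h f hf]

lemma exists_subset_of_sum_uniformRank_eq (hY : (s : Set ι).PairwiseDisjoint Y)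
    (ht : ∀ f ∈ s, 0 ≤ t f) {Z : Finset α} {τ : ℤ} (hτZ : τ ≤ #Z)
    (hτ : τ = 1 ∨ (0 < τ ∧ τ < #Z))
    (hZ : ∀ A ⊆ Z, ∑ f ∈ s, uniformRank (Y f) (t f) A = min (#A : ℤ) τ) :
    ∃ g ∈ s, Z ⊆ Y g := by
  obtain ⟨e, he⟩ : Z.Nonempty := card_pos.mp (by omega)
  obtain ⟨g, hg, x, hx⟩ := exists_mem_inter_of_sum_uniformRank_pos (s := s) (Y := Y) (t := t)
    (A := {e}) (by rw [hZ _ (singleton_subset_iff.mpr he), card_singleton]; omega)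
  obtain ⟨hxe, hxg⟩ := mem_inter.mp hx
  rw [mem_singleton.mp hxe] at hxg
  refine ⟨g, hg, ?_⟩
  by_contra hZg
  have hin : 0 < #(Z ∩ Y g) := card_pos.mpr ⟨e, mem_inter.mpr ⟨he, hxg⟩⟩
  have hout : 0 < #(Z \ Y g) := card_pos.mpr (sdiff_nonempty.mpr hZg)
  have hsplit := sum_uniformRank_eq_inter_add_sdiff hY ht hg Z
  rw [hZ Z subset_rfl, hZ _ inter_subset_left, hZ _ sdiff_subset] at hsplit
  have := card_inter_add_card_sdiff Z (Y g)
  omega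

end DirectSum

section Hypergraph

variable [DecidableEq α] {n k : ℕ} {X : Fin n → Finset α} {t : Fin n → ℤ} {c c' : Fin n → Fin k}

lemma ProperColoring.disjoint_of_eq (hc : ProperColoring (lineGraph X) c) {h h' : Fin n}
    (hne : h ≠ h') (hcc : c h = c h') : Disjoint (X h) (X h') :=
  disjoint_iff_inter_eq_empty.mpr <| not_nonempty_iff_eq_empty.mp fun hX => hc h h' ⟨hne, hX⟩ hcc

lemma ProperColoring.pairwiseDisjoint (hc : ProperColoring (lineGraph X) c) (i : Fin k) :
    ((univ.filter fun h => c h = i : Finset (Fin n)) : Set (Fin n)).PairwiseDisjoint X :=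
  fun _ hh _ hh' hne =>
    hc.disjoint_of_eq hne ((mem_filter.mp hh).2.trans (mem_filter.mp hh').2.symm)

lemma hypRho_eq_sum_hypN (X : Fin n → Finset α) (t : Fin n → ℤ) (c : Fin n → Fin k)
    (A : Finset α) : hypRho X t A = ∑ i, hypN X t c i A :=
  (sum_fiberwise _ _ _).symm

lemma ProperColoring.isMatroidRankOn_hypN (hc : ProperColoring (lineGraph X) c) (E : Finset α)
    (ht : ∀ h, 0 ≤ t h) (i : Fin k) : IsMatroidRankOn E (hypN X t c i) :=
  isMatroidRankOn_sum_uniformRank E (hc.pairwiseDisjoint i) fun h _ => ht h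

lemma ProperColoring.exists_subset_of_hypN_eq (hc : ProperColoring (lineGraph X) c)
    (hc' : ProperColoring (lineGraph X) c') (ht : ∀ h, 0 ≤ t h ∧ t h ≤ #(X h))
    (hconn : ∀ h, t h = 1 ∨ (0 < t h ∧ t h < #(X h)))
    (hN : ∀ i, hypN X t c i = hypN X t c' i) (h : Fin n) :
    ∃ g, c' g = c h ∧ X h ⊆ X g := by
  have hN_restrict (A : Finset α) (hA : A ⊆ X h) : hypN X t c' (c h) A = min (#A : ℤ) (t h) :=
    (congrFun (hN (c h)) A).symm.trans <| sum_uniformRank_of_subset (hc.pairwiseDisjoint (c h))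
      (fun g _ => (ht g).1) (mem_filter.mpr ⟨mem_univ h, rfl⟩) hA
  obtain ⟨g, hg, hsub⟩ := exists_subset_of_sum_uniformRank_eq (hc'.pairwiseDisjoint (c h))
    (fun g _ => (ht g).1) (ht h).2 (hconn h) hN_restrict
  exact ⟨g, (mem_filter.mp hg).2, hsub⟩

lemma ProperColoring.eq_of_hypN_eq (hc : ProperColoring (lineGraph X) c)
    (hc' : ProperColoring (lineGraph X) c') (hX : Function.Injective X)
    (ht : ∀ h, 0 ≤ t h ∧ t h ≤ #(X h)) (hconn : ∀ h, t h = 1 ∨ (0 < t h ∧ t h < #(X h)))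
    (hN : ∀ i, hypN X t c i = hypN X t c' i) : c = c' := by
  funext h
  obtain ⟨g, hgc, hhg⟩ := hc.exists_subset_of_hypN_eq hc' ht hconn hN h
  obtain ⟨f, hfc, hgf⟩ := hc'.exists_subset_of_hypN_eq hc ht hconn (fun i => (hN i).symm) g
  obtain ⟨x, hx⟩ : (X h).Nonempty :=
    card_pos.mp (by have := ht h; rcases hconn h with _ | _ <;> omega)
  obtain rfl : f = h := by
    by_contra hfh
    exact disjoint_left.mp (hc.disjoint_of_eq hfh (hfc.trans hgc)) (hgf (hhg hx)) hx
  obtain rfl : g = f := hX (hgf.antisymm hhg)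
  exact hgc.symm

end Hypergraph

theorem stmt3_general [DecidableEq α] {n k : ℕ} (E : Finset α)
    (X : Fin n → Finset α)
    (t : Fin n → ℤ) (ht : ∀ i, 0 ≤ t i ∧ t i ≤ ((X i).card : ℤ))
    (c : Fin n → Fin k) (hc : ProperColoring (lineGraph X) c) :
    (∀ h h' : Fin n, h ≠ h' → c h = c h' → Disjoint (X h) (X h')) ∧
    (∀ i : Fin k, IsMatroidRankOn E (hypN X t c i)) ∧
    (∀ A ⊆ E, hypRho X t A = ∑ i, hypN X t c i A) ∧
    KDecomposable k E (hypRho X t) ∧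
    (Function.Injective X →
      (∀ i, t i = 1 ∨ (0 < t i ∧ t i < ((X i).card : ℤ))) →
      ∀ c' : Fin n → Fin k, ProperColoring (lineGraph X) c' →
        (∀ i : Fin k, hypN X t c i = hypN X t c' i) → c = c') := by
  have hmatroid := hc.isMatroidRankOn_hypN E fun h => (ht h).1
  have hsum (A : Finset α) (_ : A ⊆ E) := hypRho_eq_sum_hypN X t c A
  exact ⟨fun _ _ => hc.disjoint_of_eq, hmatroid, hsum, ⟨hypN X t c, hmatroid, hsum⟩,
    fun hX hconn c' hc' hN => hc.eq_of_hypN_eq hc' hX ht hconn hN⟩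

theorem stmt3 [DecidableEq α] {n k : ℕ} (E : Finset α)
    (X : Fin n → Finset α)
    (hXsub : ∀ i, X i ⊆ E) (hXne : ∀ i, (X i).Nonempty)
    (t : Fin n → ℤ) (ht : ∀ i, 0 ≤ t i ∧ t i ≤ ((X i).card : ℤ))
    (hk : 0 < k)
    (c : Fin n → Fin k) (hc : ProperColoring (lineGraph X) c) :
    (∀ h h' : Fin n, h ≠ h' → c h = c h' → Disjoint (X h) (X h')) ∧
    (∀ i : Fin k, IsMatroidRankOn E (hypN X t c i)) ∧
    (∀ A ⊆ E, hypRho X t A = ∑ i, hypN X t c i A) ∧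
    KDecomposable k E (hypRho X t) ∧
    (Function.Injective X →
      (∀ i, t i = 1 ∨ (0 < t i ∧ t i < ((X i).card : ℤ))) →
      ∀ c' : Fin n → Fin k, ProperColoring (lineGraph X) c' →
        (∀ i : Fin k, hypN X t c i = hypN X t c' i) → c = c') :=
  stmt3_general E X t ht c hc
end

section
/- Let H = (E, {X_1, …, X_n}) be a hypergraph satisfying properties (H2) and (H3), and let ρ be the polymatroid on E given by ρ(A) = Σ_{i=1}^n min(|A ∩ X_i|, 1), i.e., all t_i equal 1. Fix an integer s with max{ρ(A) : A ⊆ E, |A| ≤ 4} ≤ s < ρ(E). If the truncation T(ρ, s) is k-decomposable, then there is a proper k-coloring c of the line graph G_H with s ≥ c_1 + 2·c_2^+, where c_1 (respectively c_2^+) is the number of colors whose color class under c has size exactly 1 (respectively at least 2). In particular, if s < χ(G_H), then T(ρ, s) is not k-decomposable for any k. -/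
variable {α : Type*}

/-- The polymatroid `ρ(A) = Σ_i min(|A ∩ X_i|, 1)` (all `t_i = 1`). -/
def hypRho1 [DecidableEq α] {n : ℕ} (X : Fin n → Finset α) : Finset α → ℤ :=
  fun A => ∑ i, min (((A ∩ X i).card : ℤ)) 1

/-- `c₁`: the number of colors whose color class has size exactly 1. -/
def colorCount1 {V : Type*} [Fintype V] [DecidableEq V] {k : ℕ} (c : V → Fin k) : ℕ :=
  (Finset.univ.filter fun i : Fin k => (Finset.univ.filter fun v => c v = i).card = 1).card

/-- `c₂⁺`: the number of colors whose color class has size at least 2. -/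
def colorCount2 {V : Type*} [Fintype V] [DecidableEq V] {k : ℕ} (c : V → Fin k) : ℕ :=
  (Finset.univ.filter fun i : Fin k => 2 ≤ (Finset.univ.filter fun v => c v = i).card).card

/-!
Write `δ_r(A) = ∑_{v ∈ A} r {v} - r A`. On sets of at most four elements `T(ρ, s)` agrees with
`ρ`, so the defects `δ_{M i}` of the matroids of a decomposition, all nonnegative, add up to `δ_ρ`
there; and by (H2) `δ_ρ` of such sets is read off from the hyperedges, e.g. `δ_ρ {u, v}` is 1 or 0
according as `u` and `v` share a hyperedge or not. Hence each hyperedge is a set of parallel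
elements in exactly one of the matroids, and counting defects on sets of four elements, with (H3),
shows that two intersecting hyperedges never get the same matroid. Coloring each hyperedge by that
matroid (a singleton `{a}` by one avoiding the larger hyperedges through `a`, which exists as `a`
has rank one in `deg a` matroids) is a proper coloring. A color class with one hyperedge has rank
at least 1 in its matroid, one with two disjoint hyperedges rank at least 2, and these ranks sum to
at most `T(ρ, s)(E) ≤ s`.
-/

open Finset

section Defect

def defect (r : Finset α → ℤ) (A : Finset α) : ℤ := ∑ v ∈ A, r {v} - r A

theorem defect_singleton (r : Finset α → ℤ) (v : α) : defect r {v} = 0 := by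
  simp [defect]

variable [DecidableEq α]

def Parallel (r : Finset α → ℤ) (u v : α) : Prop := r {u} = 1 ∧ r {v} = 1 ∧ r {u, v} = 1

def ParallelOn (r : Finset α → ℤ) (S : Finset α) : Prop := ∀ u ∈ S, ∀ v ∈ S, Parallel r u v

variable {r : Finset α → ℤ} {u v w : α} {S T : Finset α}

theorem defect_insert (r : Finset α → ℤ) {A : Finset α} (hw : w ∉ A) :
    defect r (insert w A) = defect r A + (r {w} + r A - r (insert w A)) := by
  rw [defect, defect, sum_insert hw]
  ring

theorem Parallel.symm (h : Parallel r u v) : Parallel r v u :=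
  ⟨h.2.1, h.1, by rw [pair_comm]; exact h.2.2⟩

theorem Parallel.refl_left (h : Parallel r u v) : Parallel r u u :=
  ⟨h.1, h.1, by simpa using h.1⟩

theorem Parallel.one_le_defect (h : Parallel r u v) (huv : u ≠ v) : 1 ≤ defect r {u, v} := by
  rw [defect, sum_pair huv, h.1, h.2.1, h.2.2]
  norm_num

theorem ParallelOn.mono (h : ParallelOn r S) (hTS : T ⊆ S) : ParallelOn r T :=
  fun u hu v hv => h u (hTS hu) v (hTS hv)

end Defect

namespace IsMatroidRankOn

variable [DecidableEq α] {E : Finset α} {r : Finset α → ℤ} {A B S : Finset α} {u v w x : α}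

theorem mono (h : IsMatroidRankOn E r) (hAB : A ⊆ B) (hB : B ⊆ E) : r A ≤ r B :=
  h.1.2.1 A B hAB hB

theorem submod (h : IsMatroidRankOn E r) (hA : A ⊆ E) (hB : B ⊆ E) :
    r (A ∪ B) + r (A ∩ B) ≤ r A + r B :=
  h.1.2.2 A B hA hB

theorem nonneg (h : IsMatroidRankOn E r) (hA : A ⊆ E) : 0 ≤ r A :=
  h.1.1 ▸ h.mono (empty_subset A) hA

theorem singleton_le_one (h : IsMatroidRankOn E r) (hv : v ∈ E) : r {v} ≤ 1 :=
  h.2 v hv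

theorem defect_le_defect_insert (h : IsMatroidRankOn E r) (hA : A ⊆ E) (hw : w ∈ E) :
    defect r A ≤ defect r (insert w A) := by
  by_cases hwA : w ∈ A
  · rw [insert_eq_of_mem hwA]
  have hwE : {w} ⊆ E := singleton_subset_iff.mpr hw
  have := h.submod hwE hA
  have := h.nonneg (inter_subset_left.trans hwE : {w} ∩ A ⊆ E)
  rw [defect_insert r hwA, insert_eq]
  linarith

theorem defect_mono (h : IsMatroidRankOn E r) (hAB : A ⊆ B) (hB : B ⊆ E) :
    defect r A ≤ defect r B := by
  have hgrow : ∀ C ⊆ E, defect r A ≤ defect r (C ∪ A) := by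
    intro C
    induction C using Finset.induction_on with
    | empty => simp
    | insert c C _ ih =>
      intro hC
      rw [insert_union]
      exact (ih ((subset_insert c C).trans hC)).trans
        (h.defect_le_defect_insert (union_subset ((subset_insert c C).trans hC) (hAB.trans hB))
          (hC (mem_insert_self c C)))
  simpa [sdiff_union_of_subset hAB] using hgrow (B \ A) (sdiff_subset.trans hB)

theorem defect_nonneg (h : IsMatroidRankOn E r) (hA : A ⊆ E) : 0 ≤ defect r A := by
  simpa [defect, h.1.1] using h.defect_mono (empty_subset A) hA

theorem defect_insert_le (h : IsMatroidRankOn E r) (hA : A ⊆ E) (hw : w ∈ E) (hwA : w ∉ A) :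
    defect r (insert w A) ≤ defect r A + r {w} := by
  have := h.mono (subset_insert w A) (insert_subset hw hA)
  rw [defect_insert r hwA]
  linarith

theorem defect_add_defect_le (h : IsMatroidRankOn E r) (hA : A ⊆ E) (hB : B ⊆ E) :
    defect r A + defect r B ≤ defect r (A ∪ B) + defect r (A ∩ B) := by
  have := h.submod hA hB
  have := sum_union_inter (s₁ := A) (s₂ := B) (f := fun v => r {v})
  simp only [defect]
  linarith

theorem parallel_of_defect_pos (h : IsMatroidRankOn E r) (hu : u ∈ E) (hv : v ∈ E) (huv : u ≠ v)
    (hpos : 0 < defect r {u, v}) : Parallel r u v := by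
  have hpair : {u, v} ⊆ E := insert_subset hu (singleton_subset_iff.mpr hv)
  have := h.mono (singleton_subset_iff.mpr (mem_insert_self u {v})) hpair
  have := h.mono (singleton_subset_iff.mpr (mem_insert_of_mem (mem_singleton_self v))) hpair
  have := h.singleton_le_one hu
  have := h.singleton_le_one hv
  rw [defect, sum_pair huv] at hpos
  refine ⟨?_, ?_, ?_⟩ <;> omega

theorem parallel_trans (h : IsMatroidRankOn E r) (hu : u ∈ E) (hv : v ∈ E) (hw : w ∈ E)
    (huv : Parallel r u v) (hvw : Parallel r v w) : Parallel r u w := by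
  have hE : ∀ {a b}, a ∈ E → b ∈ E → ({a, b} : Finset α) ⊆ E :=
    fun ha hb => insert_subset ha (singleton_subset_iff.mpr hb)
  have hsub := h.submod (hE hu hv) (hE hv hw)
  have hinter := h.mono (A := {v}) (B := {u, v} ∩ {v, w}) (by simp)
    (inter_subset_left.trans (hE hu hv))
  have hunion := h.mono (A := {u, w}) (by simp [insert_subset_iff])
    (union_subset (hE hu hv) (hE hv hw))
  have := h.mono (A := {u}) (by simp) (hE hu hw)
  exact ⟨huv.1, hvw.2.1, by linarith [huv.1, huv.2.2, hvw.2.2, hvw.1]⟩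

theorem parallelOn_insert (h : IsMatroidRankOn E r) (hS : S ⊆ E) (hw : w ∈ E) (hx : x ∈ S)
    (hP : ParallelOn r S) (hxw : Parallel r x w) : ParallelOn r (insert w S) := by
  have hwx := hxw.symm
  intro a ha b hb
  rw [mem_insert] at ha hb
  rcases ha with rfl | ha <;> rcases hb with rfl | hb
  · exact hwx.refl_left
  · exact h.parallel_trans hw (hS hx) (hS hb) hwx (hP x hx b hb)
  · exact h.parallel_trans (hS ha) (hS hx) hw (hP a ha x hx) hxw
  · exact hP a ha b hb

theorem rank_le_one_of_parallelOn (h : IsMatroidRankOn E r) (hS : S ⊆ E) (hP : ParallelOn r S) :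
    r S ≤ 1 := by
  induction S using Finset.induction_on with
  | empty => rw [h.1.1]; norm_num
  | insert x S _ ih =>
    have hSE : S ⊆ E := (subset_insert x S).trans hS
    have hrS := ih hSE (hP.mono (subset_insert x S))
    obtain rfl | ⟨a, ha⟩ := S.eq_empty_or_nonempty
    · exact ((hP x (mem_insert_self x ∅) x (mem_insert_self x ∅)).1).le
    have hxa := hP a (mem_insert_of_mem ha) x (mem_insert_self x S)
    have hax : {a, x} ⊆ E :=
      insert_subset (hSE ha) (singleton_subset_iff.mpr (hS (mem_insert_self x S)))
    have hsub := h.submod hSE hax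
    have := h.mono (A := {a}) (B := S ∩ {a, x}) (by simp [ha]) (inter_subset_left.trans hSE)
    rw [union_insert, insert_eq_of_mem (mem_union_left _ ha), union_singleton] at hsub
    linarith [hxa.1, hxa.2.2]

theorem defect_eq_of_parallelOn (h : IsMatroidRankOn E r) (hS : S ⊆ E) (hne : S.Nonempty)
    (hP : ParallelOn r S) : defect r S = #S - 1 := by
  obtain ⟨a, ha⟩ := hne
  have hle := h.rank_le_one_of_parallelOn hS hP
  have hge := h.mono (singleton_subset_iff.mpr ha) hS
  have hsum : ∑ v ∈ S, r {v} = #S := by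
    rw [sum_congr rfl fun v hv => (hP v hv v hv).1]
    simp
  rw [defect, hsum]
  linarith [(hP a ha a ha).1]

theorem defect_add_defect_le_of_distinct (h : IsMatroidRankOn E r) {y z : α}
    (hx : x ∈ E) (hy : y ∈ E) (hz : z ∈ E) (hw : w ∈ E)
    (hxy : x ≠ y) (hxz : x ≠ z) (hyz : y ≠ z) (hwx : w ≠ x) (hwy : w ≠ y) (hwz : w ≠ z) :
    defect r {w, x, y} + defect r {w, x, z} ≤ defect r {w, x} + defect r {x, y, z} + r {w} := by
  have hsub : ∀ {s : Finset α}, (∀ a ∈ s, a = w ∨ a = x ∨ a = y ∨ a = z) → s ⊆ E := by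
    intro s hs a ha
    rcases hs a ha with rfl | rfl | rfl | rfl <;> assumption
  have hsuper := h.defect_add_defect_le (A := {w, x, y}) (B := {w, x, z})
    (hsub (by simp)) (hsub (by simp))
  have hins := h.defect_insert_le (A := {x, y, z}) (hsub (by simp)) hw (by simp [hwx, hwy, hwz])
  rw [show ({w, x, y} ∪ {w, x, z} : Finset α) = insert w {x, y, z} by ext; simp,
    show ({w, x, y} ∩ {w, x, z} : Finset α) = {w, x} by
      ext; simp only [mem_inter, mem_insert, mem_singleton]; grind] at hsuper
  linarith

end IsMatroidRankOn

section Hypergraph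

variable [DecidableEq α] {n : ℕ} {X : Fin n → Finset α} {A : Finset α} {j f f₁ f₂ : Fin n}
  {p q u v w : α}

def edgesLinking (X : Fin n → Finset α) (w : α) (A : Finset α) : Finset (Fin n) :=
  univ.filter fun e => w ∈ X e ∧ (A ∩ X e).Nonempty

theorem mem_edgesLinking {e : Fin n} :
    e ∈ edgesLinking X w A ↔ w ∈ X e ∧ (A ∩ X e).Nonempty := by
  simp [edgesLinking]

theorem hypRho1_eq_card (X : Fin n → Finset α) (A : Finset α) :
    hypRho1 X A = #(univ.filter fun e => (A ∩ X e).Nonempty) := by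
  rw [hypRho1, card_filter, Nat.cast_sum]
  refine sum_congr rfl fun e _ => ?_
  rcases (A ∩ X e).eq_empty_or_nonempty with h | h <;> simp [h]

theorem hypRho1_insert_add (X : Fin n → Finset α) (w : α) (A : Finset α) :
    hypRho1 X (insert w A) + #(edgesLinking X w A) = hypRho1 X A + hypRho1 X {w} := by
  have h := card_union_add_card_inter (univ.filter fun e => (A ∩ X e).Nonempty)
    (univ.filter fun e => ({w} ∩ X e).Nonempty)
  rw [← filter_or, ← filter_and] at h
  simp only [hypRho1_eq_card, edgesLinking]
  have hins : ∀ e, (insert w A ∩ X e).Nonempty ↔ (A ∩ X e).Nonempty ∨ ({w} ∩ X e).Nonempty := by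
    intro e
    rw [insert_eq, union_inter_distrib_right, union_nonempty, or_comm]
  have hw : ∀ e, ({w} ∩ X e).Nonempty ↔ w ∈ X e := fun e => by simp [Finset.Nonempty]
  simp only [hins, hw, and_comm] at h ⊢
  exact_mod_cast h

theorem defect_hypRho1_insert (hw : w ∉ A) :
    defect (hypRho1 X) (insert w A) = defect (hypRho1 X) A + #(edgesLinking X w A) := by
  rw [defect_insert _ hw]
  linarith [hypRho1_insert_add X w A]

theorem edge_eq_of_mem (hH2 : ∀ i j, i ≠ j → (X i ∩ X j).card ≤ 1) {e e' : Fin n}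
    (huv : u ≠ v) (hu : u ∈ X e) (hv : v ∈ X e) (hu' : u ∈ X e') (hv' : v ∈ X e') : e = e' := by
  by_contra hne
  have := card_le_card (show {u, v} ⊆ X e ∩ X e' by simp [insert_subset_iff, *])
  have := hH2 e e' hne
  rw [card_pair huv] at *
  omega

theorem card_edgesLinking_le (hH2 : ∀ i j, i ≠ j → (X i ∩ X j).card ≤ 1) (hw : w ∉ A) :
    #(edgesLinking X w A) ≤ #A := by
  calc #(edgesLinking X w A)
      ≤ #(A.biUnion fun a => univ.filter fun e => w ∈ X e ∧ a ∈ X e) := by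
        refine card_le_card fun e he => ?_
        obtain ⟨hwe, a, ha⟩ := mem_edgesLinking.mp he
        rw [mem_inter] at ha
        simp only [mem_biUnion, mem_filter, mem_univ, true_and]
        exact ⟨a, ha.1, hwe, ha.2⟩
    _ ≤ ∑ a ∈ A, #(univ.filter fun e => w ∈ X e ∧ a ∈ X e) := card_biUnion_le
    _ ≤ ∑ _a ∈ A, 1 := by
        refine sum_le_sum fun a ha => card_le_one.mpr fun e he e' he' => ?_
        simp only [mem_filter, mem_univ, true_and] at he he'
        exact edge_eq_of_mem hH2 (ne_of_mem_of_not_mem ha hw).symm he.1 he.2 he'.1 he'.2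
    _ = #A := by simp

theorem edgesLinking_subset_singleton (hH2 : ∀ i j, i ≠ j → (X i ∩ X j).card ≤ 1) (hw : w ∉ A)
    (hA : insert w A ⊆ X j) : edgesLinking X w A ⊆ {j} := by
  intro e he
  obtain ⟨hwe, a, ha⟩ := mem_edgesLinking.mp he
  rw [mem_inter] at ha
  rw [mem_singleton]
  exact edge_eq_of_mem hH2 (ne_of_mem_of_not_mem ha.1 hw).symm hwe ha.2
    (hA (mem_insert_self w A)) (hA (mem_insert_of_mem ha.1))

theorem defect_hypRho1_pair (huv : u ≠ v) :
    defect (hypRho1 X) {u, v} = #(edgesLinking X u {v}) := by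
  rw [defect_hypRho1_insert (by simpa using huv), defect_singleton, zero_add]

theorem defect_hypRho1_pair_le_one (hH2 : ∀ i j, i ≠ j → (X i ∩ X j).card ≤ 1) (huv : u ≠ v) :
    defect (hypRho1 X) {u, v} ≤ 1 := by
  rw [defect_hypRho1_pair huv]
  exact_mod_cast card_edgesLinking_le hH2 (A := {v}) (by simpa using huv)

theorem one_le_defect_hypRho1_pair (huv : u ≠ v) (hu : u ∈ X j) (hv : v ∈ X j) :
    1 ≤ defect (hypRho1 X) {u, v} := by
  rw [defect_hypRho1_pair huv, Nat.one_le_cast, Nat.one_le_iff_ne_zero, Ne, card_eq_zero,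
    ← Ne, ← nonempty_iff_ne_empty]
  exact ⟨j, mem_edgesLinking.mpr ⟨hu, v, by simp [hv]⟩⟩

theorem exists_edge_of_defect_hypRho1_pair_pos (huv : u ≠ v)
    (h : 0 < defect (hypRho1 X) {u, v}) : ∃ j, u ∈ X j ∧ v ∈ X j := by
  rw [defect_hypRho1_pair huv, Nat.cast_pos, card_pos] at h
  obtain ⟨j, hj⟩ := h
  obtain ⟨hu, x, hx⟩ := mem_edgesLinking.mp hj
  rw [mem_inter, mem_singleton] at hx
  exact ⟨j, hu, hx.1 ▸ hx.2⟩

theorem defect_hypRho1_triple_le_two (hH2 : ∀ i j, i ≠ j → (X i ∩ X j).card ≤ 1)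
    (hpq : p ≠ q) (hpu : p ≠ u) (hqu : q ≠ u) (hp : p ∈ X j) (hq : q ∈ X j) (hu : u ∈ X j) :
    defect (hypRho1 X) {p, q, u} ≤ 2 := by
  have hpA : p ∉ ({q, u} : Finset α) := by simp [hpq, hpu]
  rw [defect_hypRho1_insert hpA]
  have := defect_hypRho1_pair_le_one hH2 (X := X) hqu
  have := card_le_card (edgesLinking_subset_singleton hH2 hpA (j := j)
    (by simp [insert_subset_iff, hp, hq, hu]))
  rw [card_singleton] at this
  omega

theorem three_le_defect_hypRho1 (hH2 : ∀ i j, i ≠ j → (X i ∩ X j).card ≤ 1) (hpq : p ≠ q)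
    (hp : p ∈ X f) (hq : q ∈ X f) (hw : w ∉ X f) (hp₁ : p ∈ X f₁) (hw₁ : w ∈ X f₁)
    (hq₂ : q ∈ X f₂) (hw₂ : w ∈ X f₂) : 3 ≤ defect (hypRho1 X) {w, p, q} := by
  have hf₁₂ : f₁ ≠ f₂ := by
    rintro rfl
    exact hw (edge_eq_of_mem hH2 hpq hp₁ hq₂ hp hq ▸ hw₁)
  have hlink : {f₁, f₂} ⊆ edgesLinking X w {p, q} := by
    simp only [insert_subset_iff, singleton_subset_iff, mem_edgesLinking]
    exact ⟨⟨hw₁, p, by simp [hp₁]⟩, hw₂, q, by simp [hq₂]⟩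
  have := card_le_card hlink
  rw [card_pair hf₁₂] at this
  have hwA : w ∉ ({p, q} : Finset α) := by
    simp only [mem_insert, mem_singleton]
    rintro (rfl | rfl) <;> contradiction
  rw [defect_hypRho1_insert hwA]
  have := one_le_defect_hypRho1_pair hpq hp hq
  omega

theorem defect_hypRho1_le_five (hH2 : ∀ i j, i ≠ j → (X i ∩ X j).card ≤ 1)
    (hpq : p ≠ q) (hpu : p ≠ u) (hqu : q ≠ u) (hp : p ∈ X f) (hq : q ∈ X f) (hu : u ∈ X f)
    (hw : w ∉ X f) : defect (hypRho1 X) {w, p, q, u} ≤ 5 := by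
  have hwA : w ∉ ({p, q, u} : Finset α) := by
    simp only [mem_insert, mem_singleton]
    rintro (rfl | rfl | rfl) <;> contradiction
  rw [defect_hypRho1_insert hwA]
  have := defect_hypRho1_triple_le_two hH2 hpq hpu hqu hp hq hu
  have := card_edgesLinking_le hH2 hwA
  have : #({p, q, u} : Finset α) ≤ 3 := card_le_three
  omega

end Hypergraph

theorem card_le_sum_of_one_le {ι : Type*} {f : ι → ℤ} {S T : Finset ι} (hST : S ⊆ T)
    (hf : ∀ i ∈ T, 0 ≤ f i) (hS : ∀ i ∈ S, 1 ≤ f i) : (#S : ℤ) ≤ ∑ i ∈ T, f i :=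
  calc (#S : ℤ) = ∑ _i ∈ S, 1 := by simp
    _ ≤ ∑ i ∈ S, f i := sum_le_sum hS
    _ ≤ ∑ i ∈ T, f i := sum_le_sum_of_subset_of_nonneg hST fun i hi _ => hf i hi

/-- What a decomposition of `T(ρ, s)` provides when `s` dominates `ρ` on sets of at most four
elements. -/
structure SmallDecomposition [DecidableEq α] {n k : ℕ} (E : Finset α) (X : Fin n → Finset α)
    (M : Fin k → Finset α → ℤ) : Prop where
  isMatroidRankOn : ∀ i, IsMatroidRankOn E (M i)
  sum_eq : ∀ A ⊆ E, #A ≤ 4 → ∑ i, M i A = hypRho1 X A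

namespace SmallDecomposition

variable [DecidableEq α] {n k : ℕ} {E A : Finset α} {X : Fin n → Finset α}
  {M : Fin k → Finset α → ℤ} {i i' : Fin k} {j : Fin n} {u v w x : α}

theorem sum_defect (hD : SmallDecomposition E X M) (hA : A ⊆ E) (hA4 : #A ≤ 4) :
    ∑ i, defect (M i) A = defect (hypRho1 X) A := by
  simp only [defect, sum_sub_distrib, hD.sum_eq A hA hA4]
  rw [sum_comm]
  congr 1
  exact sum_congr rfl fun v hv => hD.sum_eq {v} (singleton_subset_iff.mpr (hA hv)) (by simp)

theorem defect_nonneg (hD : SmallDecomposition E X M) (hA : A ⊆ E) : 0 ≤ defect (M i) A :=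
  (hD.isMatroidRankOn i).defect_nonneg hA

theorem parallel_unique (hD : SmallDecomposition E X M)
    (hH2 : ∀ i j, i ≠ j → (X i ∩ X j).card ≤ 1) (hu : u ∈ E) (hv : v ∈ E) (huv : u ≠ v)
    (h : Parallel (M i) u v) (h' : Parallel (M i') u v) : i = i' := by
  by_contra hne
  have hpair : {u, v} ⊆ E := insert_subset hu (singleton_subset_iff.mpr hv)
  have := card_le_sum_of_one_le (subset_univ {i, i'}) (fun _ _ => hD.defect_nonneg hpair)
    (f := fun i => defect (M i) {u, v}) (by simp [h.one_le_defect huv, h'.one_le_defect huv])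
  rw [card_pair hne, Nat.cast_ofNat, hD.sum_defect hpair (card_le_two.trans (by norm_num))] at this
  linarith [defect_hypRho1_pair_le_one hH2 (X := X) huv]

theorem exists_parallel (hD : SmallDecomposition E X M) (hXsub : ∀ j, X j ⊆ E) (huv : u ≠ v)
    (hu : u ∈ X j) (hv : v ∈ X j) : ∃ i, Parallel (M i) u v := by
  have hpair : {u, v} ⊆ E := insert_subset (hXsub j hu) (singleton_subset_iff.mpr (hXsub j hv))
  have h1 := one_le_defect_hypRho1_pair huv hu hv
  rw [← hD.sum_defect hpair (card_le_two.trans (by norm_num))] at h1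
  obtain ⟨i, -, hi⟩ := exists_lt_of_sum_lt (s := univ) (f := fun _ => (0 : ℤ))
    (g := fun i => defect (M i) {u, v}) (by simp only [sum_const_zero]; omega)
  exact ⟨i, (hD.isMatroidRankOn i).parallel_of_defect_pos (hXsub j hu) (hXsub j hv) huv hi⟩

theorem exists_edge_of_parallel (hD : SmallDecomposition E X M) (hu : u ∈ E) (hv : v ∈ E)
    (huv : u ≠ v) (h : Parallel (M i) u v) : ∃ j, u ∈ X j ∧ v ∈ X j := by
  have hpair : {u, v} ⊆ E := insert_subset hu (singleton_subset_iff.mpr hv)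
  refine exists_edge_of_defect_hypRho1_pair_pos huv ?_
  rw [← hD.sum_defect hpair (card_le_two.trans (by norm_num))]
  calc 0 < defect (M i) {u, v} := h.one_le_defect huv
    _ ≤ ∑ i, defect (M i) {u, v} :=
      single_le_sum (fun i _ => hD.defect_nonneg hpair) (mem_univ i)

theorem parallel_of_mem_edge (hD : SmallDecomposition E X M) (hXsub : ∀ j, X j ⊆ E)
    (hH2 : ∀ i j, i ≠ j → (X i ∩ X j).card ≤ 1) (huv : u ≠ v) (huw : u ≠ w) (hvw : v ≠ w)
    (hu : u ∈ X j) (hv : v ∈ X j) (hw : w ∈ X j) (h : Parallel (M i) u v) :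
    Parallel (M i) u w := by
  have hE := hXsub j
  obtain ⟨i', h'⟩ := hD.exists_parallel hXsub huw hu hw
  obtain ⟨i'', h''⟩ := hD.exists_parallel hXsub hvw hv hw
  by_cases hii' : i = i'
  · exact hii' ▸ h'
  by_cases hii'' : i = i''
  · exact (hD.isMatroidRankOn i).parallel_trans (hE hu) (hE hv) (hE hw) h (hii'' ▸ h'')
  by_cases hi'i'' : i' = i''
  · refine absurd (hD.parallel_unique hH2 (hE hu) (hE hv) huv h ?_) hii'
    exact (hD.isMatroidRankOn i').parallel_trans (hE hu) (hE hw) (hE hv) h' (hi'i'' ▸ h''.symm)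
  -- the three pairs of `{u, v, w}` would be parallel in three different matroids
  have hT : {u, v, w} ⊆ E := by simp [insert_subset_iff, hE hu, hE hv, hE hw]
  have hpos : ∀ {i a b}, Parallel (M i) a b → a ≠ b → {a, b} ⊆ ({u, v, w} : Finset α) →
      1 ≤ defect (M i) {u, v, w} := fun hab hne hsub =>
    (hab.one_le_defect hne).trans ((hD.isMatroidRankOn _).defect_mono hsub hT)
  have h3 := card_le_sum_of_one_le (subset_univ {i, i', i''}) (fun _ _ => hD.defect_nonneg hT)
    (f := fun i => defect (M i) {u, v, w}) (by
      simp only [mem_insert, mem_singleton, forall_eq_or_imp, forall_eq]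
      exact ⟨hpos h huv (by simp [insert_subset_iff]), hpos h' huw (by simp [insert_subset_iff]),
        hpos h'' hvw (by simp)⟩)
  rw [card_eq_three.mpr ⟨i, i', i'', hii', hii'', hi'i'', rfl⟩, Nat.cast_ofNat,
    hD.sum_defect hT (card_le_three.trans (by norm_num))]
    at h3
  linarith [defect_hypRho1_triple_le_two hH2 huv huw hvw hu hv hw]

theorem parallelOn_edge (hD : SmallDecomposition E X M) (hXsub : ∀ j, X j ⊆ E)
    (hH2 : ∀ i j, i ≠ j → (X i ∩ X j).card ≤ 1) (huv : u ≠ v) (hu : u ∈ X j) (hv : v ∈ X j)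
    (h : Parallel (M i) u v) : ParallelOn (M i) (X j) := by
  have hu' : ∀ x ∈ X j, Parallel (M i) u x := by
    intro x hx
    by_cases hxu : x = u
    · exact hxu ▸ h.refl_left
    by_cases hxv : x = v
    · exact hxv ▸ h
    exact hD.parallel_of_mem_edge hXsub hH2 huv (Ne.symm hxu) (Ne.symm hxv) hu hv hx h
  intro x hx y hy
  exact (hD.isMatroidRankOn i).parallel_trans (hXsub j hx) (hXsub j hu) (hXsub j hy)
    (hu' x hx).symm (hu' y hy)

theorem parallelOn_edge_unique (hD : SmallDecomposition E X M) (hXsub : ∀ j, X j ⊆ E)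
    (hH2 : ∀ i j, i ≠ j → (X i ∩ X j).card ≤ 1) (hj : 1 < #(X j))
    (h : ParallelOn (M i) (X j)) (h' : ParallelOn (M i') (X j)) : i = i' := by
  obtain ⟨u, hu, v, hv, huv⟩ := one_lt_card.mp hj
  exact hD.parallel_unique hH2 (hXsub j hu) (hXsub j hv) huv (h u hu v hv) (h' u hu v hv)

end SmallDecomposition

namespace SmallDecomposition

variable [DecidableEq α] {n k : ℕ} {E : Finset α} {X : Fin n → Finset α}
  {M : Fin k → Finset α → ℤ} {i i' : Fin k} {j : Fin n} {w x y z t : α}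

theorem defect_eq_zero_of_parallelOn_edge (hD : SmallDecomposition E X M)
    (hXsub : ∀ j, X j ⊆ E) (hH2 : ∀ i j, i ≠ j → (X i ∩ X j).card ≤ 1)
    (hP : ParallelOn (M i) (X j)) (hi' : i' ≠ i) (hy : y ∈ X j) (hz : z ∈ X j) (ht : t ∈ X j)
    (hyz : y ≠ z) (hyt : y ≠ t) (hzt : z ≠ t) : defect (M i') {y, z, t} = 0 := by
  have hA : {y, z, t} ⊆ X j := by simp [insert_subset_iff, hy, hz, ht]
  have hAE := hA.trans (hXsub j)
  have hsum := add_le_sum (f := fun i => defect (M i) {y, z, t})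
    (fun _ _ => hD.defect_nonneg hAE) (mem_univ i) (mem_univ i') hi'.symm
  rw [hD.sum_defect hAE (card_le_three.trans (by norm_num)),
    (hD.isMatroidRankOn i).defect_eq_of_parallelOn hAE (insert_nonempty _ _) (hP.mono hA),
    card_eq_three.mpr ⟨y, z, t, hyz, hyt, hzt, rfl⟩] at hsum
  have := defect_hypRho1_triple_le_two hH2 hyz hyt hzt hy hz ht
  have := hD.defect_nonneg (i := i') hAE
  push_cast at hsum
  omega

theorem exists_defect_pos_of_parallelOn_insert (hD : SmallDecomposition E X M)
    (hXsub : ∀ j, X j ⊆ E) (hH2 : ∀ i j, i ≠ j → (X i ∩ X j).card ≤ 1)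
    (hP : ParallelOn (M i) (insert w (X j))) (hw : w ∈ E) (hwj : w ∉ X j)
    (hy : y ∈ X j) (hz : z ∈ X j) (hyz : y ≠ z) : ∃ i' ≠ i, 1 ≤ defect (M i') {w, y, z} := by
  have hwy : w ≠ y := fun h => hwj (h ▸ hy)
  have hwz : w ≠ z := fun h => hwj (h ▸ hz)
  have hA : {w, y, z} ⊆ insert w (X j) := by simp [insert_subset_iff, hy, hz]
  have hAE := hA.trans (insert_subset hw (hXsub j))
  obtain ⟨f₁, hy₁, hw₁⟩ := hD.exists_edge_of_parallel (hXsub j hy) hw hwy.symm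
    (hP y (mem_insert_of_mem hy) w (mem_insert_self w _))
  obtain ⟨f₂, hz₂, hw₂⟩ := hD.exists_edge_of_parallel (hXsub j hz) hw hwz.symm
    (hP z (mem_insert_of_mem hz) w (mem_insert_self w _))
  have h3 := three_le_defect_hypRho1 hH2 hyz hy hz hwj hy₁ hw₁ hz₂ hw₂
  rw [← hD.sum_defect hAE (card_le_three.trans (by norm_num)), ← add_sum_erase _ _ (mem_univ i),
    (hD.isMatroidRankOn i).defect_eq_of_parallelOn hAE (insert_nonempty _ _) (hP.mono hA),
    card_eq_three.mpr ⟨w, y, z, hwy, hwz, hyz, rfl⟩] at h3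
  push_cast at h3
  obtain ⟨i', hi', hpos⟩ := exists_lt_of_sum_lt (s := univ.erase i) (f := fun _ => (0 : ℤ))
    (g := fun i => defect (M i) {w, y, z}) (by simp only [sum_const_zero]; omega)
  exact ⟨i', ne_of_mem_erase hi', hpos⟩

theorem defect_le_zero_of_parallelOn_insert (hD : SmallDecomposition E X M)
    (hXsub : ∀ j, X j ⊆ E) (hH2 : ∀ i j, i ≠ j → (X i ∩ X j).card ≤ 1)
    (hP : ParallelOn (M i) (insert w (X j))) (hw : w ∈ E) (hwj : w ∉ X j) (hi' : i' ≠ i)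
    (hy : y ∈ X j) (hz : z ∈ X j) (ht : t ∈ X j) (hyz : y ≠ z) (hyt : y ≠ t) (hzt : z ≠ t)
    (h : 1 ≤ defect (M i') {w, y, z}) : defect (M i') {w, y, t} ≤ 0 := by
  have hne : ∀ {a}, a ∈ X j → w ≠ a := fun ha h => hwj (h ▸ ha)
  have hwy : defect (M i') {w, y} ≤ 0 := by
    by_contra hpos
    have hpar := (hD.isMatroidRankOn i').parallel_of_defect_pos hw (hXsub j hy) (hne hy)
      (by omega)
    exact hi' (hD.parallel_unique hH2 hw (hXsub j hy) (hne hy) hpar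
      (hP w (mem_insert_self w _) y (mem_insert_of_mem hy)))
  have := (hD.isMatroidRankOn i').defect_add_defect_le_of_distinct (hXsub j hy) (hXsub j hz)
    (hXsub j ht) hw hyz hyt hzt (hne hy) (hne hz) (hne ht)
  have := (hD.isMatroidRankOn i').singleton_le_one hw
  have := hD.defect_eq_zero_of_parallelOn_edge hXsub hH2
    (hP.mono (subset_insert w (X j))) hi' hy hz ht hyz hyt hzt
  omega

/-- The configuration excluded here: a hyperedge `{p, q, u, …}` and an outside element `w` joined to
`p`, `q`, `u` by three further hyperedges, all of `p, q, u, w` parallel in one matroid. The total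
defect of `{w, p, q, u}` is at most 5, but it is 3 in that matroid and each triple `{w, ·, ·}`
needs defect in its own further matroid. -/
theorem not_parallel_of_parallelOn_edge (hD : SmallDecomposition E X M) (hXsub : ∀ j, X j ⊆ E)
    (hH2 : ∀ i j, i ≠ j → (X i ∩ X j).card ≤ 1) (hj : 2 < #(X j)) (hP : ParallelOn (M i) (X j))
    (hx : x ∈ X j) (hw : w ∈ E) (hwj : w ∉ X j) : ¬Parallel (M i) x w := by
  intro hxw
  have hPw := (hD.isMatroidRankOn i).parallelOn_insert (hXsub j) hw hx hP hxw
  have hne : ∀ {a}, a ∈ X j → w ≠ a := fun ha h => hwj (h ▸ ha)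
  obtain ⟨p, hp, q, hq, u, hu, hpq, hpu, hqu⟩ := two_lt_card.mp hj
  obtain ⟨i₁, hi₁, h₁⟩ := hD.exists_defect_pos_of_parallelOn_insert hXsub hH2 hPw hw hwj hp hq hpq
  obtain ⟨i₂, hi₂, h₂⟩ := hD.exists_defect_pos_of_parallelOn_insert hXsub hH2 hPw hw hwj hp hu hpu
  obtain ⟨i₃, hi₃, h₃⟩ := hD.exists_defect_pos_of_parallelOn_insert hXsub hH2 hPw hw hwj hq hu hqu
  have h₁₂ : i₁ ≠ i₂ := by
    rintro rfl
    linarith [hD.defect_le_zero_of_parallelOn_insert hXsub hH2 hPw hw hwj hi₁ hp hq hu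
      hpq hpu hqu h₁]
  have h₁₃ : i₁ ≠ i₃ := by
    rintro rfl
    rw [pair_comm] at h₁
    linarith [hD.defect_le_zero_of_parallelOn_insert hXsub hH2 hPw hw hwj hi₁ hq hp hu
      hpq.symm hqu hpu h₁]
  have h₂₃ : i₂ ≠ i₃ := by
    rintro rfl
    rw [pair_comm] at h₂ h₃
    linarith [hD.defect_le_zero_of_parallelOn_insert hXsub hH2 hPw hw hwj hi₂ hu hp hq
      hpu.symm hqu.symm hpq h₂]
  have hQ : {w, p, q, u} ⊆ insert w (X j) := by simp [insert_subset_iff, hp, hq, hu]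
  have hQE := hQ.trans (insert_subset hw (hXsub j))
  have hQcard : #{w, p, q, u} = 4 := by
    rw [card_insert_of_notMem (by simp [hne hp, hne hq, hne hu]),
      card_eq_three.mpr ⟨p, q, u, hpq, hpu, hqu, rfl⟩]
  have hmono : ∀ {i a b}, 1 ≤ defect (M i) {w, a, b} → {a, b} ⊆ ({p, q, u} : Finset α) →
      1 ≤ defect (M i) {w, p, q, u} := fun h hab =>
    h.trans ((hD.isMatroidRankOn _).defect_mono (insert_subset_insert w hab) hQE)
  have hge := card_le_sum_of_one_le (S := {i₁, i₂, i₃}) (T := univ.erase i)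
    (f := fun i => defect (M i) {w, p, q, u}) (by simp [insert_subset_iff, hi₁, hi₂, hi₃])
    (fun _ _ => hD.defect_nonneg hQE) (by
      simp only [mem_insert, mem_singleton, forall_eq_or_imp, forall_eq]
      exact ⟨hmono h₁ (by simp [insert_subset_iff]), hmono h₂ (by simp [insert_subset_iff]),
        hmono h₃ (by simp)⟩)
  have hle := defect_hypRho1_le_five hH2 hpq hpu hqu hp hq hu hwj
  rw [← hD.sum_defect hQE hQcard.le, ← add_sum_erase _ _ (mem_univ i),
    (hD.isMatroidRankOn i).defect_eq_of_parallelOn hQE (insert_nonempty _ _) (hPw.mono hQ),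
    hQcard] at hle
  rw [card_eq_three.mpr ⟨i₁, i₂, i₃, h₁₂, h₁₃, h₂₃, rfl⟩] at hge
  push_cast at hge hle
  linarith

end SmallDecomposition

namespace SmallDecomposition

variable [DecidableEq α] {n k : ℕ} {E : Finset α} {X : Fin n → Finset α}
  {M : Fin k → Finset α → ℤ} {i : Fin k} {j j' : Fin n} {a : α}

theorem not_parallelOn_of_mem_inter (hD : SmallDecomposition E X M) (hXsub : ∀ j, X j ⊆ E)
    (hH2 : ∀ i j, i ≠ j → (X i ∩ X j).card ≤ 1)
    (hH3 : ¬ ∃ (a b c : α) (i j l : Fin n),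
      a ≠ b ∧ a ≠ c ∧ b ≠ c ∧ X i = {a, b} ∧ X j = {a, c} ∧ X l = {b, c})
    (hjj' : j ≠ j') (hj : 1 < #(X j)) (hj' : 1 < #(X j')) (ha : a ∈ X j) (ha' : a ∈ X j')
    (hP : ParallelOn (M i) (X j)) : ¬ParallelOn (M i) (X j') := by
  intro hP'
  have hM := hD.isMatroidRankOn i
  have hout : ∀ {l l' b}, l ≠ l' → a ∈ X l → a ∈ X l' → b ∈ X l' → b ≠ a → b ∉ X l :=
    fun hll' hal hal' hb hba hbl => hll' (edge_eq_of_mem hH2 hba hbl hal hb hal')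
  obtain ⟨b, hb, hba⟩ := exists_mem_ne hj a
  obtain ⟨c, hc, hca⟩ := exists_mem_ne hj' a
  have hbj' := hout hjj'.symm ha' ha hb hba
  have hcj := hout hjj' ha ha' hc hca
  by_cases h3 : 2 < #(X j)
  · exact hD.not_parallel_of_parallelOn_edge hXsub hH2 h3 hP ha (hXsub j' hc) hcj (hP' a ha' c hc)
  by_cases h3' : 2 < #(X j')
  · exact hD.not_parallel_of_parallelOn_edge hXsub hH2 h3' hP' ha' (hXsub j hb) hbj'
      (hP a ha b hb)
  have hpair : ∀ {l x y}, x ∈ X l → y ∈ X l → x ≠ y → ¬2 < #(X l) → X l = {x, y} :=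
    fun hx hy hxy h2 => (eq_of_subset_of_card_le (by simp [insert_subset_iff, hx, hy])
      (by rw [card_pair hxy]; omega)).symm
  have hbc : b ≠ c := fun h => hcj (h ▸ hb)
  have hbcP := hM.parallel_trans (hXsub j hb) (hXsub j ha) (hXsub j' hc) (hP b hb a ha)
    (hP' a ha' c hc)
  obtain ⟨l, hbl, hcl⟩ := hD.exists_edge_of_parallel (hXsub j hb) (hXsub j' hc) hbc hbcP
  have hPl := hD.parallelOn_edge hXsub hH2 hbc hbl hcl hbcP
  have hal : a ∉ X l := fun hal => hcj (edge_eq_of_mem hH2 hba hbl hal hb ha ▸ hcl)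
  by_cases h3l : 2 < #(X l)
  · exact hD.not_parallel_of_parallelOn_edge hXsub hH2 h3l hPl hbl (hXsub j ha) hal (hP b hb a ha)
  exact hH3 ⟨a, b, c, j, j', l, hba.symm, hca.symm, hbc, hpair ha hb hba.symm h3,
    hpair ha' hc hca.symm h3', hpair hbl hcl hbc h3l⟩

theorem exists_rank_eq_one_not_parallelOn (hD : SmallDecomposition E X M) (hXsub : ∀ j, X j ⊆ E)
    (hH2 : ∀ i j, i ≠ j → (X i ∩ X j).card ≤ 1) (hXj : X j = {a}) :
    ∃ i, M i {a} = 1 ∧ ∀ j', a ∈ X j' → 1 < #(X j') → ¬ParallelOn (M i) (X j') := by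
  have haE : a ∈ E := hXsub j (by simp [hXj])
  set C := univ.filter fun i => M i {a} = 1
  set D := univ.filter fun e => a ∈ X e
  set N := D.filter fun e => 1 < #(X e)
  have hCD : #C = #D := by
    have hsum := hD.sum_eq {a} (singleton_subset_iff.mpr haE) (by simp)
    rw [hypRho1_eq_card] at hsum
    have hC : ∑ i, M i {a} = #C := by
      rw [card_filter, Nat.cast_sum]
      refine sum_congr rfl fun i _ => ?_
      have := (hD.isMatroidRankOn i).singleton_le_one haE
      have := (hD.isMatroidRankOn i).nonneg (singleton_subset_iff.mpr haE)
      split_ifs <;> push_cast <;> omega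
    have hD' : (univ.filter fun e => ({a} ∩ X e).Nonempty) = D := by
      ext e
      simp [D, Finset.Nonempty]
    rw [hC, hD'] at hsum
    exact_mod_cast hsum
  have hND : #N < #D := card_lt_card ((ssubset_iff_of_subset (filter_subset _ _)).mpr
    ⟨j, by simp [D, hXj], by simp [hXj]⟩)
  by_contra hbad
  push Not at hbad
  have : Nonempty (Fin n) := ⟨j⟩
  choose! f hf using hbad
  have hCN : #C ≤ #N := card_le_card_of_injOn f
    (fun i hi => by
      obtain ⟨h1, h2, -⟩ := hf i (mem_filter.mp hi).2
      simp [N, D, h1, h2])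
    (fun i hi i' hi' hii' => by
      obtain ⟨-, h2, h3⟩ := hf i (mem_filter.mp hi).2
      obtain ⟨-, -, h3'⟩ := hf i' (mem_filter.mp hi').2
      exact hD.parallelOn_edge_unique hXsub hH2 h2 h3 (hii' ▸ h3'))
  omega

end SmallDecomposition

def IsParallelColoring [DecidableEq α] {n k : ℕ} (M : Fin k → Finset α → ℤ)
    (X : Fin n → Finset α) (c : Fin n → Fin k) : Prop :=
  ∀ j, ParallelOn (M (c j)) (X j) ∧
    ∀ a, X j = {a} → ∀ j', a ∈ X j' → 1 < #(X j') → ¬ParallelOn (M (c j)) (X j')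

section Coloring

variable [DecidableEq α] {n k : ℕ} {E : Finset α} {X : Fin n → Finset α}
  {M : Fin k → Finset α → ℤ} {c : Fin n → Fin k}

theorem SmallDecomposition.exists_isParallelColoring (hD : SmallDecomposition E X M)
    (hXsub : ∀ j, X j ⊆ E) (hXne : ∀ j, (X j).Nonempty)
    (hH2 : ∀ i j, i ≠ j → (X i ∩ X j).card ≤ 1) : ∃ c, IsParallelColoring M X c := by
  have hcolor : ∀ j, ∃ i, ParallelOn (M i) (X j) ∧
      ∀ a, X j = {a} → ∀ j', a ∈ X j' → 1 < #(X j') → ¬ParallelOn (M i) (X j') := by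
    intro j
    obtain ⟨a, ha⟩ | hnt := (hXne j).exists_eq_singleton_or_nontrivial
    · obtain ⟨i, hi, havoid⟩ := hD.exists_rank_eq_one_not_parallelOn hXsub hH2 ha
      refine ⟨i, ?_, fun b hb => ?_⟩
      · simp [ha, ParallelOn, Parallel, hi]
      · rwa [← singleton_inj.mp (ha.symm.trans hb)]
    · obtain ⟨u, hu, v, hv, huv⟩ := one_lt_card.mp (one_lt_card_iff_nontrivial.mpr hnt)
      obtain ⟨i, hi⟩ := hD.exists_parallel hXsub huv hu hv
      refine ⟨i, hD.parallelOn_edge hXsub hH2 huv hu hv hi, fun a ha => ?_⟩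
      rw [ha, mem_singleton] at hu hv
      exact absurd (hu.trans hv.symm) huv
  choose c hc using hcolor
  exact ⟨c, hc⟩

namespace IsParallelColoring

theorem not_parallelOn (hc : IsParallelColoring M X c) (hD : SmallDecomposition E X M)
    (hXsub : ∀ j, X j ⊆ E) (hXne : ∀ j, (X j).Nonempty)
    (hH2 : ∀ i j, i ≠ j → (X i ∩ X j).card ≤ 1)
    (hH3 : ¬ ∃ (a b c : α) (i j l : Fin n),
      a ≠ b ∧ a ≠ c ∧ b ≠ c ∧ X i = {a, b} ∧ X j = {a, c} ∧ X l = {b, c})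
    {p l : Fin n} {x : α} (hpl : p ≠ l) (hl : 1 < #(X l)) (hxp : x ∈ X p) (hxl : x ∈ X l) :
    ¬ParallelOn (M (c p)) (X l) := by
  obtain ⟨a, ha⟩ | hnt := (hXne p).exists_eq_singleton_or_nontrivial
  · rw [ha, mem_singleton] at hxp
    exact (hc p).2 a ha l (hxp ▸ hxl) hl
  · exact hD.not_parallelOn_of_mem_inter hXsub hH2 hH3 hpl (one_lt_card_iff_nontrivial.mpr hnt)
      hl hxp hxl (hc p).1

theorem properColoring (hc : IsParallelColoring M X c) (hD : SmallDecomposition E X M)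
    (hXsub : ∀ j, X j ⊆ E) (hXne : ∀ j, (X j).Nonempty) (hXinj : Function.Injective X)
    (hH2 : ∀ i j, i ≠ j → (X i ∩ X j).card ≤ 1)
    (hH3 : ¬ ∃ (a b c : α) (i j l : Fin n),
      a ≠ b ∧ a ≠ c ∧ b ≠ c ∧ X i = {a, b} ∧ X j = {a, c} ∧ X l = {b, c}) :
    ProperColoring (lineGraph X) c := by
  rintro p q ⟨hpq, x, hx⟩ hcpq
  rw [mem_inter] at hx
  obtain ⟨a, ha⟩ | hq := (hXne q).exists_eq_singleton_or_nontrivial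
  · obtain ⟨b, hb⟩ | hp := (hXne p).exists_eq_singleton_or_nontrivial
    · rw [ha, hb, mem_singleton, mem_singleton] at hx
      exact hpq (hXinj (by rw [ha, hb, ← hx.1, hx.2]))
    · exact hc.not_parallelOn hD hXsub hXne hH2 hH3 (Ne.symm hpq)
        (one_lt_card_iff_nontrivial.mpr hp) hx.2 hx.1 (hcpq ▸ (hc p).1)
  · exact hc.not_parallelOn hD hXsub hXne hH2 hH3 hpq (one_lt_card_iff_nontrivial.mpr hq)
      hx.1 hx.2 (hcpq ▸ (hc q).1)

/-- Two disjoint hyperedges of the same color `i` contain a pair of elements independent in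
`M i`, for otherwise the pair would lie in a hyperedge clashing with one of them. -/
theorem min_card_le_rank (hc : IsParallelColoring M X c) (hD : SmallDecomposition E X M)
    (hXsub : ∀ j, X j ⊆ E) (hXne : ∀ j, (X j).Nonempty) (hXinj : Function.Injective X)
    (hH2 : ∀ i j, i ≠ j → (X i ∩ X j).card ≤ 1)
    (hH3 : ¬ ∃ (a b c : α) (i j l : Fin n),
      a ≠ b ∧ a ≠ c ∧ b ≠ c ∧ X i = {a, b} ∧ X j = {a, c} ∧ X l = {b, c}) (i : Fin k) :
    min (#(univ.filter fun j => c j = i) : ℤ) 2 ≤ M i E := by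
  have hM := hD.isMatroidRankOn i
  have hrank : ∀ {p u}, c p = i → u ∈ X p → M i {u} = 1 := fun {p _} hcp hu =>
    (hcp ▸ (hc p).1 _ hu _ hu).1
  obtain h0 | ⟨p, hp⟩ := (univ.filter fun j => c j = i).eq_empty_or_nonempty
  · simpa [h0] using hM.nonneg subset_rfl
  obtain ⟨u, hu⟩ := hXne p
  have hcp := (mem_filter.mp hp).2
  by_cases h1 : #(univ.filter fun j => c j = i) ≤ 1
  · have := hM.mono (singleton_subset_iff.mpr (hXsub p hu)) subset_rfl
    have := hrank hcp hu
    omega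
  obtain ⟨q, hq, hqp⟩ := exists_mem_ne (not_le.mp h1) p
  have hcq := (mem_filter.mp hq).2
  obtain ⟨v, hv⟩ := hXne q
  have hvp : v ∉ X p := fun hvp => hc.properColoring hD hXsub hXne hXinj hH2 hH3 q p
    ⟨hqp, v, mem_inter.mpr ⟨hv, hvp⟩⟩ (hcq.trans hcp.symm)
  have huv : u ≠ v := fun h => hvp (h ▸ hu)
  have hpair : {u, v} ⊆ E := insert_subset (hXsub p hu) (singleton_subset_iff.mpr (hXsub q hv))
  have h2 : 2 ≤ M i {u, v} := by
    by_contra hlt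
    have := hM.mono (singleton_subset_iff.mpr (mem_insert_self u {v})) hpair
    have hpar : Parallel (M i) u v :=
      ⟨hrank hcp hu, hrank hcq hv, by rw [hrank hcp hu] at this; omega⟩
    obtain ⟨l, hul, hvl⟩ := hD.exists_edge_of_parallel (hXsub p hu) (hXsub q hv) huv hpar
    have hpl : p ≠ l := by rintro rfl; exact hvp hvl
    exact hc.not_parallelOn hD hXsub hXne hH2 hH3 hpl (one_lt_card.mpr ⟨u, hul, v, hvl, huv⟩)
      hu hul (hcp ▸ hD.parallelOn_edge hXsub hH2 huv hul hvl hpar)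
  linarith [min_le_right (#(univ.filter fun j => c j = i) : ℤ) 2, hM.mono hpair subset_rfl]

end IsParallelColoring

end Coloring

section ColorCount

variable {V : Type*} [Fintype V] [DecidableEq V] {k : ℕ}

theorem colorCount1_add_two_mul_colorCount2 (c : V → Fin k) :
    (colorCount1 c : ℤ) + 2 * colorCount2 c = ∑ i, min (#(univ.filter fun v => c v = i) : ℤ) 2 := by
  rw [colorCount1, colorCount2, natCast_card_filter, natCast_card_filter, mul_sum,
    ← sum_add_distrib]
  refine sum_congr rfl fun i _ => ?_
  split_ifs <;> omega

theorem le_colorCount_of_isLeast [Nonempty V] {G : SimpleGraph V} {χ : ℕ}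
    (hχ : IsLeast {m : ℕ | 0 < m ∧ ∃ c : V → Fin m, ProperColoring G c} χ) {c : V → Fin k}
    (hc : ProperColoring G c) : (χ : ℤ) ≤ colorCount1 c + 2 * colorCount2 c := by
  set U := univ.image c
  have hχU : χ ≤ #U := hχ.2 ⟨card_pos.mpr (univ_nonempty.image c),
    fun v => U.equivFin ⟨c v, mem_image_of_mem c (mem_univ v)⟩,
    fun u v huv h => hc u v huv (congrArg Subtype.val (U.equivFin.injective h))⟩
  have hU : (#U : ℤ) ≤ ∑ i, min (#(univ.filter fun v => c v = i) : ℤ) 2 :=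
    card_le_sum_of_one_le (subset_univ U) (fun _ _ => by positivity) fun i hi => by
      obtain ⟨v, -, rfl⟩ := mem_image.mp hi
      have : 0 < #(univ.filter fun w => c w = c v) := card_pos.mpr ⟨v, by simp⟩
      omega
  rw [colorCount1_add_two_mul_colorCount2]
  omega

end ColorCount

theorem exists_properColoring_of_kDecomposable [DecidableEq α] {n k : ℕ} {E : Finset α}
    {X : Fin n → Finset α} (hXsub : ∀ i, X i ⊆ E) (hXne : ∀ i, (X i).Nonempty)
    (hXinj : Function.Injective X) (hH2 : ∀ i j, i ≠ j → (X i ∩ X j).card ≤ 1)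
    (hH3 : ¬ ∃ (a b c : α) (i j l : Fin n),
      a ≠ b ∧ a ≠ c ∧ b ≠ c ∧ X i = {a, b} ∧ X j = {a, c} ∧ X l = {b, c})
    {s : ℤ} (hs : ∀ A ⊆ E, A.card ≤ 4 → hypRho1 X A ≤ s)
    (hdec : KDecomposable k E fun A => min (hypRho1 X A) s) :
    ∃ c : Fin n → Fin k, ProperColoring (lineGraph X) c ∧
      (colorCount1 c : ℤ) + 2 * (colorCount2 c : ℤ) ≤ s := by
  obtain ⟨M, hM, hsum⟩ := hdec
  have hD : SmallDecomposition E X M :=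
    ⟨hM, fun A hA hA4 => ((hsum A hA).symm.trans (min_eq_left (hs A hA hA4)))⟩
  obtain ⟨c, hc⟩ := hD.exists_isParallelColoring hXsub hXne hH2
  refine ⟨c, hc.properColoring hD hXsub hXne hXinj hH2 hH3, ?_⟩
  calc (colorCount1 c : ℤ) + 2 * colorCount2 c
      = ∑ i, min (#(univ.filter fun j => c j = i) : ℤ) 2 := colorCount1_add_two_mul_colorCount2 c
    _ ≤ ∑ i, M i E := sum_le_sum fun i _ => hc.min_card_le_rank hD hXsub hXne hXinj hH2 hH3 i
    _ = min (hypRho1 X E) s := (hsum E subset_rfl).symm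
    _ ≤ s := min_le_right _ _

theorem stmt6 [DecidableEq α] {n : ℕ} (E : Finset α)
    (X : Fin n → Finset α)
    (hXsub : ∀ i, X i ⊆ E) (hXne : ∀ i, (X i).Nonempty)
    (hXinj : Function.Injective X)
    (hH2 : ∀ i j, i ≠ j → (X i ∩ X j).card ≤ 1)
    (hH3 : ¬ ∃ (a b c : α) (i j l : Fin n),
      a ≠ b ∧ a ≠ c ∧ b ≠ c ∧ X i = {a, b} ∧ X j = {a, c} ∧ X l = {b, c})
    (s : ℤ)
    (hs1 : ∀ A ⊆ E, A.card ≤ 4 → hypRho1 X A ≤ s)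
    (hs2 : s < hypRho1 X E) :
    (∀ k : ℕ, 0 < k →
      KDecomposable k E (fun A => min (hypRho1 X A) s) →
      ∃ c : Fin n → Fin k, ProperColoring (lineGraph X) c ∧
        (colorCount1 c : ℤ) + 2 * (colorCount2 c : ℤ) ≤ s) ∧
    (∀ χ : ℕ,
      IsLeast {m : ℕ | 0 < m ∧
        ∃ c : Fin n → Fin m, ProperColoring (lineGraph X) c} χ →
      s < (χ : ℤ) → ∀ k : ℕ, 0 < k →
        ¬ KDecomposable k E (fun A => min (hypRho1 X A) s)) := by
  refine ⟨fun k _ hdec => exists_properColoring_of_kDecomposable hXsub hXne hXinj hH2 hH3 hs1 hdec,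
    fun χ hχ hsχ k _ hdec => ?_⟩
  obtain ⟨c, hc, hcount⟩ := exists_properColoring_of_kDecomposable hXsub hXne hXinj hH2 hH3 hs1 hdec
  -- `hypRho1 X ∅ = 0 ≤ s < hypRho1 X E` rules out the empty hypergraph
  have : Nonempty (Fin n) := by
    rw [← Fin.pos_iff_nonempty, Nat.pos_iff_ne_zero]
    rintro rfl
    have := hs1 ∅ (empty_subset E) (by simp)
    simp [hypRho1] at this hs2
    omega
  have := le_colorCount_of_isLeast hχ hc
  omega
end
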